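/- Assume R is irreducible (R cannot be partitioned into two nonempty mutually orthogonal subsets) and let π ∈ E with π ≠ 0. Let W(π) denote the (finite) Weyl orbit of π. Then: (i) Σ_{τ∈W(π)} τ = 0 (so the W-invariant linear form x ↦ Σ_{τ∈W(π)} ⟨τ,x⟩ vanishes identically), and (ii) there exists a constant c > 0 such that Σ_{τ∈W(π)} ⟨τ,x⟩² = c·⟨x,x⟩ for all x ∈ E. -/

import Mathlib

open scoped RealInnerProductSpace

noncomputable section

variable {E : Type*} [NormedAddCommGroup E] [InnerProductSpace ℝ E]

/-- The coroot pairing `⟨x, α∨⟩ = 2⟨x,α⟩/⟨α,α⟩`. -/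
def copair (α x : E) : ℝ := 2 * ⟪x, α⟫ / ⟪α, α⟫

/-- The orthogonal reflection `r_α(x) = x - ⟨x,α∨⟩α`. -/
def reflRoot (α x : E) : E := x - copair α x • α

/-- The set of reflections in the roots of `R`, as linear automorphisms. -/
def reflections (R : Finset E) : Set (E ≃ₗ[ℝ] E) :=
  {g | ∃ α ∈ R, ∀ x, g x = reflRoot α x}

/-- The Weyl group of `R`. -/
def weylGroup (R : Finset E) : Subgroup (E ≃ₗ[ℝ] E) :=
  Subgroup.closure (reflections R)

/-- The Weyl orbit `W(x)` as a finset. -/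
def weylOrbit [DecidableEq E] (R : Finset E) [Fintype (weylGroup R)] (x : E) : Finset E :=
  Finset.image (fun w : weylGroup R => (w : E ≃ₗ[ℝ] E) x) Finset.univ

-- auxiliary lemmas

lemma copair_zero_of (α : E) (h : ⟪α, α⟫ = 0) (x : E) : copair α x = 0 := by
  rw [copair, h, div_zero]

lemma reflRoot_inner (α x y : E) : ⟪reflRoot α x, reflRoot α y⟫ = ⟪x, y⟫ := by
  by_cases h : ⟪α, α⟫ = (0 : ℝ)
  · simp [reflRoot, copair_zero_of α h]
  · simp only [reflRoot, copair, inner_sub_sub_self, real_inner_smul_left,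
      real_inner_smul_right, inner_sub_left, inner_sub_right]
    rw [real_inner_comm α x, real_inner_comm α y]
    field_simp
    ring

lemma reflRoot_involutive (α : E) : Function.Involutive (reflRoot α) := by
  intro x
  by_cases h : ⟪α, α⟫ = (0 : ℝ)
  · simp [reflRoot, copair_zero_of α h]
  · have hc : copair α (reflRoot α x) = - copair α x := by
      simp only [copair, reflRoot, inner_sub_left, real_inner_smul_left]
      field_simp
      ring
    simp only [reflRoot] at hc ⊢
    rw [hc]
    module

lemma copair_add (α x y : E) : copair α (x + y) = copair α x + copair α y := by
  simp [copair, inner_add_left]; ring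

lemma copair_smul (α : E) (c : ℝ) (x : E) : copair α (c • x) = c * copair α x := by
  simp [copair, real_inner_smul_left]; ring

/-- The reflection as a linear automorphism. -/
def reflLE (α : E) : E ≃ₗ[ℝ] E :=
  LinearEquiv.ofInvolutive
    { toFun := reflRoot α
      map_add' := fun x y => by
        simp only [reflRoot, copair_add, add_smul]; abel
      map_smul' := fun c x => by
        simp only [reflRoot, copair_smul, RingHom.id_apply, smul_sub, mul_smul] }
    (reflRoot_involutive α)

@[simp] lemma reflLE_apply (α x : E) : reflLE α x = reflRoot α x := rfl

lemma reflLE_mem {R : Finset E} {α : E} (hα : α ∈ R) : reflLE α ∈ weylGroup R :=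
  Subgroup.subset_closure ⟨α, hα, fun _ => rfl⟩

lemma weyl_inner {R : Finset E} {w : E ≃ₗ[ℝ] E} (hw : w ∈ weylGroup R) :
    ∀ x y : E, ⟪w x, w y⟫ = ⟪x, y⟫ := by
  induction hw using Subgroup.closure_induction with
  | mem g hg =>
    obtain ⟨α, -, hgα⟩ := hg
    intro x y
    rw [hgα, hgα]; exact reflRoot_inner α x y
  | one => intro x y; rfl
  | mul g h _ _ hg hh =>
    intro x y
    have : ∀ z : E, (g * h) z = g (h z) := fun z => rfl
    rw [this, this, hg, hh]
  | inv g _ hg =>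
    intro x y
    have := hg (g⁻¹ x) (g⁻¹ y)
    have h1 : ∀ z : E, g (g⁻¹ z) = z := fun z => g.apply_symm_apply z
    rw [h1, h1] at this
    exact this.symm

section orbit
variable [DecidableEq E] (R : Finset E) [Fintype (weylGroup R)] (π : E)

lemma mem_weylOrbit_self : π ∈ weylOrbit R π := by
  simp only [weylOrbit, Finset.mem_image]
  exact ⟨1, Finset.mem_univ _, rfl⟩

lemma smul_mem_weylOrbit {w : E ≃ₗ[ℝ] E} (hw : w ∈ weylGroup R) {τ : E}
    (hτ : τ ∈ weylOrbit R π) : w τ ∈ weylOrbit R π := by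
  simp only [weylOrbit, Finset.mem_image] at hτ ⊢
  obtain ⟨u, -, rfl⟩ := hτ
  exact ⟨(⟨w, hw⟩ : weylGroup R) * u, Finset.mem_univ _, rfl⟩

lemma sum_weylOrbit_comp {M : Type*} [AddCommMonoid M] {w : E ≃ₗ[ℝ] E}
    (hw : w ∈ weylGroup R) (f : E → M) :
    ∑ τ ∈ weylOrbit R π, f (w τ) = ∑ τ ∈ weylOrbit R π, f τ := by
  refine Finset.sum_nbij' (fun τ => w τ) (fun τ => w⁻¹ τ) ?_ ?_ ?_ ?_ ?_
  · intro τ hτ; exact smul_mem_weylOrbit R π hw hτ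
  · intro τ hτ; exact smul_mem_weylOrbit R π (inv_mem hw) hτ
  · intro τ _; exact w.symm_apply_apply τ
  · intro τ _; exact w.apply_symm_apply τ
  · intro τ _; rfl

end orbit

/-- **Invariant linear and quadratic forms attached to a Weyl orbit of an
irreducible root system.**  For `π ≠ 0`: (i) `Σ_{τ∈W(π)} τ = 0`, and
(ii) there is a `c > 0` with `Σ_{τ∈W(π)} ⟨τ,x⟩² = c⟨x,x⟩` for all `x`. -/
theorem orbit_sum_zero_and_quadratic_form
    [DecidableEq E] (R : Finset E) [Fintype (weylGroup R)]
    (h0 : (0 : E) ∉ R)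
    (hspan : Submodule.span ℝ (R : Set E) = ⊤)
    (hcrys : ∀ α ∈ R, ∀ β ∈ R, ∃ z : ℤ, copair α β = (z : ℝ))
    (hrc : ∀ α ∈ R, ∀ β ∈ R, reflRoot α β ∈ R)
    (hirr : ∀ R1 R2 : Finset E, Disjoint R1 R2 → R1 ∪ R2 = R →
      R1.Nonempty → R2.Nonempty → (∀ α ∈ R1, ∀ β ∈ R2, ⟪α, β⟫ = 0) → False)
    (π : E) (hπ : π ≠ 0) :
    (∑ τ ∈ weylOrbit R π, τ) = 0 ∧
      ∃ c : ℝ, 0 < c ∧ ∀ x : E, ∑ τ ∈ weylOrbit R π, ⟪τ, x⟫ ^ 2 = c * ⟪x, x⟫ := by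
  -- basic facts about roots
  have hαα : ∀ α ∈ R, ⟪α, α⟫ ≠ (0 : ℝ) := by
    intro α hα h
    exact h0 (by rwa [inner_self_eq_zero.mp h] at hα)
  -- the reflection moves a root to its negative
  have hrefl_self : ∀ α ∈ R, reflRoot α α = -α := by
    intro α hα
    have h := hαα α hα
    simp only [reflRoot, copair]
    rw [show 2 * ⟪α, α⟫ / ⟪α, α⟫ = 2 by field_simp]
    module
  -- orthogonality to all roots implies zero
  have horth : ∀ v : E, (∀ α ∈ R, ⟪α, v⟫ = 0) → v = 0 := by
    intro v hv
    have hmem : v ∈ Submodule.span ℝ (R : Set E) := hspan ▸ Submodule.mem_top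
    have hv' : ∀ u ∈ Submodule.span ℝ (R : Set E), ⟪u, v⟫ = 0 := by
      intro u hu
      induction hu using Submodule.span_induction with
      | mem w hw => exact hv w hw
      | zero => simp
      | add a b _ _ h1 h2 => rw [inner_add_left, h1, h2, add_zero]
      | smul c a _ h1 => rw [real_inner_smul_left, h1, mul_zero]
    exact inner_self_eq_zero.mp (hv' v hmem)
  -- Part (i)
  have hsum0 : (∑ τ ∈ weylOrbit R π, τ) = 0 := by
    set v := ∑ τ ∈ weylOrbit R π, τ with hv
    refine horth v ?_
    intro α hα
    have hfix : reflRoot α v = v := by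
      have h1 : reflLE α v = ∑ τ ∈ weylOrbit R π, reflLE α τ := map_sum (reflLE α) _ _
      have h2 : ∑ τ ∈ weylOrbit R π, reflLE α τ = v := by
        simpa using sum_weylOrbit_comp R π (reflLE_mem hα) (id : E → E)
      rw [← reflLE_apply, h1, h2]
    have : copair α v • α = 0 := by
      have := hfix
      simp only [reflRoot] at this
      linear_combination (norm := module) -this
    rcases smul_eq_zero.mp this with h | h
    · have h' : 2 * ⟪v, α⟫ = 0 := by
        have := hαα α hα
        rw [copair, div_eq_iff this, zero_mul] at h
        simpa [real_inner_comm] using h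
      have := mul_eq_zero.mp h'
      rcases this with h2 | h2
      · norm_num at h2
      · rwa [real_inner_comm]
    · exact absurd (h ▸ hα) h0
  refine ⟨hsum0, ?_⟩
  -- Part (ii)
  set B : E → E → ℝ := fun x y => ∑ τ ∈ weylOrbit R π, ⟪τ, x⟫ * ⟪τ, y⟫ with hB
  -- invariance of B
  have hBinv : ∀ α ∈ R, ∀ x y : E, B (reflRoot α x) (reflRoot α y) = B x y := by
    intro α hα x y
    have key : ∀ τ z : E, ⟪τ, reflRoot α z⟫ = ⟪reflRoot α τ, z⟫ := by
      intro τ z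
      conv_lhs => rw [← reflRoot_involutive α τ]
      rw [reflRoot_inner]
    have h := sum_weylOrbit_comp R π (reflLE_mem hα) (fun τ => ⟪τ, x⟫ * ⟪τ, y⟫)
    simp only [reflLE_apply] at h
    simp only [hB, key]
    exact h
  -- bilinearity facts
  have hBsymm : ∀ x y, B x y = B y x := by
    intro x y; simp only [hB]; exact Finset.sum_congr rfl fun τ _ => mul_comm _ _
  have hBsub : ∀ x y z, B (x - y) z = B x z - B y z := by
    intro x y z
    simp only [hB, inner_sub_right, sub_mul, Finset.sum_sub_distrib]
  have hBsmul : ∀ (c : ℝ) x y, B (c • x) y = c * B x y := by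
    intro c x y
    simp only [hB, real_inner_smul_right, Finset.mul_sum]
    exact Finset.sum_congr rfl fun τ _ => by ring
  -- the eigenvalue relation
  have hkey : ∀ α ∈ R, ∀ x : E, B x α = B α α / ⟪α, α⟫ * ⟪x, α⟫ := by
    intro α hα x
    have h1 := hBinv α hα x α
    rw [hrefl_self α hα] at h1
    have hneg : ∀ z : E, B z (-α) = - B z α := by
      intro z; simp [hB, inner_neg_right, Finset.sum_neg_distrib, mul_neg]
    rw [hneg] at h1
    simp only [reflRoot] at h1
    rw [hBsub, hBsmul] at h1
    -- h1 : B x α - copair α x * B α α = - B x α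
    have h2 : 2 * B x α = copair α x * B α α := by linarith
    have hne := hαα α hα
    rw [copair] at h2
    field_simp at h2 ⊢
    linarith [h2]
  -- constants agree on non-orthogonal roots
  have hRne : R.Nonempty := by
    by_contra h
    rw [Finset.not_nonempty_iff_eq_empty] at h
    rw [h] at hspan
    simp only [Finset.coe_empty, Submodule.span_empty] at hspan
    have : π ∈ (⊥ : Submodule ℝ E) := hspan ▸ Submodule.mem_top
    exact hπ (Submodule.mem_bot ℝ |>.mp this)
  obtain ⟨α₀, hα₀⟩ := hRne
  set c : ℝ := B α₀ α₀ / ⟪α₀, α₀⟫ with hc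
  -- all constants equal c
  have hall : ∀ α ∈ R, B α α / ⟪α, α⟫ = c := by
    by_contra h
    push_neg at h
    obtain ⟨β, hβ, hβne⟩ := h
    set R1 := R.filter (fun α => B α α / ⟪α, α⟫ = c) with hR1
    set R2 := R.filter (fun α => B α α / ⟪α, α⟫ ≠ c) with hR2
    refine hirr R1 R2 ?_ ?_ ?_ ?_ ?_
    · exact Finset.disjoint_filter_filter_not R R (fun α => B α α / ⟪α, α⟫ = c)
    · exact Finset.filter_union_filter_not_eq _ R
    · exact ⟨α₀, Finset.mem_filter.mpr ⟨hα₀, rfl⟩⟩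
    · exact ⟨β, Finset.mem_filter.mpr ⟨hβ, hβne⟩⟩
    · intro a ha b hb
      rw [hR1, Finset.mem_filter] at ha
      rw [hR2, Finset.mem_filter] at hb
      have e1 : B a b = B b b / ⟪b, b⟫ * ⟪a, b⟫ := hkey b hb.1 a
      have e2 : B a b = B a a / ⟪a, a⟫ * ⟪b, a⟫ := by
        rw [hBsymm]; exact hkey a ha.1 b
      have hsym : ⟪b, a⟫ = ⟪a, b⟫ := real_inner_comm a b
      rw [hsym] at e2
      by_contra hab
      have heq : B b b / ⟪b, b⟫ * ⟪a, b⟫ = B a a / ⟪a, a⟫ * ⟪a, b⟫ := by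
        rw [← e1, e2]
      exact hb.2 ((mul_right_cancel₀ hab heq).trans ha.2)
  -- hence B x α = c ⟪x, α⟫ for all roots, extend by linearity
  have hBc : ∀ x y : E, B x y = c * ⟪x, y⟫ := by
    intro x y
    have hy : ∀ u ∈ Submodule.span ℝ (R : Set E), B x u = c * ⟪x, u⟫ := by
      intro u hu
      induction hu using Submodule.span_induction with
      | mem u hu => rw [hkey u hu x, hall u hu]
      | zero => simp [hB]
      | add u u' _ _ h1 h2 =>
        have : B x (u + u') = B x u + B x u' := by
          simp [hB, inner_add_right, mul_add, Finset.sum_add_distrib]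
        rw [this, h1, h2, inner_add_right]; ring
      | smul a u _ h1 =>
        have : B x (a • u) = a * B x u := by rw [hBsymm, hBsmul, hBsymm]
        rw [this, h1, real_inner_smul_right]; ring
    exact hy y (hspan ▸ Submodule.mem_top)
  -- positivity of c
  have hππ : (0 : ℝ) < ⟪π, π⟫ :=
    lt_of_le_of_ne real_inner_self_nonneg (fun h => hπ (inner_self_eq_zero.mp h.symm))
  have hBπ : 0 < B π π := by
    have hterm : (0:ℝ) < ⟪π, π⟫ * ⟪π, π⟫ := mul_pos hππ hππ
    have : ∀ τ ∈ weylOrbit R π, (0:ℝ) ≤ ⟪τ, π⟫ * ⟪τ, π⟫ := fun τ _ => mul_self_nonneg _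
    exact Finset.sum_pos' this ⟨π, mem_weylOrbit_self R π, hterm⟩
  have hcpos : 0 < c := by
    have := hBc π π
    nlinarith
  exact ⟨c, hcpos, fun x => by
    rw [← hBc x x]; exact Finset.sum_congr rfl fun τ _ => pow_two _⟩
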